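/- arXiv:1102.1119 — 2 statements merged into one kernel-verified Lean document; each statement's English description precedes it below -/
import Mathlib

section
/- Let V be a separable Hilbert space, A₀ : V × V → ℝ a continuous bilinear form with A₀(u,u) ≥ c‖u‖² (c > 0), b₀ : V×V×V → ℝ a continuous trilinear form with |b₀(u,w,v)| ≤ M‖u‖‖w‖‖v‖, and F ∈ V*. If ‖F‖_* ≤ c²/(4M), then there exists w ∈ V with A₀(w,v) + b₀(w,w,v) = ⟨F,v⟩ for all v ∈ V, and ‖w‖ ≤ c/(2M) - √((c/(2M))² - ‖F‖_*/M). -/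
open Filter

set_option maxHeartbeats 1000000

open Filter

lemma stmt13_strict {V : Type*} [NormedAddCommGroup V] [InnerProductSpace ℝ V]
    [CompleteSpace V]
    (A₀ : V →ₗ[ℝ] V →ₗ[ℝ] ℝ) (b₀ : V →ₗ[ℝ] V →ₗ[ℝ] V →ₗ[ℝ] ℝ)
    (c M Ca : ℝ) (hc : 0 < c) (hM : 0 < M)
    (hAbdd : ∀ u v : V, |A₀ u v| ≤ Ca * ‖u‖ * ‖v‖)
    (hAcoer : ∀ u : V, c * ‖u‖ ^ 2 ≤ A₀ u u)
    (hb : ∀ u w v : V, |b₀ u w v| ≤ M * ‖u‖ * ‖w‖ * ‖v‖)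
    (G : V →L[ℝ] ℝ) (hG : ‖G‖ < c ^ 2 / (4 * M)) :
    ∃ w : V, (∀ v : V, A₀ w v + b₀ w w v = G v) ∧
      ‖w‖ ≤ (c - Real.sqrt (c ^ 2 - 4 * M * ‖G‖)) / (2 * M) := by
  have hGnn : (0:ℝ) ≤ ‖G‖ := norm_nonneg G
  have harg : 0 < c ^ 2 - 4 * M * ‖G‖ := by
    rw [lt_div_iff₀ (by positivity)] at hG; nlinarith
  set s : ℝ := Real.sqrt (c ^ 2 - 4 * M * ‖G‖) with hs_def
  have hs2 : s ^ 2 = c ^ 2 - 4 * M * ‖G‖ := Real.sq_sqrt harg.le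
  have hs0 : 0 < s := Real.sqrt_pos.mpr harg
  have hsc : s ≤ c := by nlinarith
  set r : ℝ := (c - s) / (2 * M) with hr_def
  have hr0 : 0 ≤ r := by
    apply div_nonneg (by linarith) (by positivity)
  have h2Mr : 2 * M * r = c - s := by
    rw [hr_def]; field_simp
  have hcMr : c - M * r = (c + s) / 2 := by linarith
  have hGr : ‖G‖ = r * (c - M * r) := by
    have : 4 * M * ‖G‖ = 4 * M * (r * (c - M * r)) := by nlinarith
    have h4M : (0:ℝ) < 4 * M := by positivity
    exact mul_left_cancel₀ (ne_of_gt h4M) this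
  have hcs2 : (0:ℝ) < (c + s) / 2 := by linarith
  -- solving the linearized problem
  have solve : ∀ u : V, ‖u‖ ≤ r →
      ∃ w : V, (∀ v : V, A₀ w v + b₀ u w v = G v) ∧ ‖w‖ ≤ r := by
    intro u hu
    set Bl : V →ₗ[ℝ] V →ₗ[ℝ] ℝ := A₀ + b₀ u with hBl_def
    have hBlbdd : ∀ x y : V, ‖Bl x y‖ ≤ (Ca + M * ‖u‖) * ‖x‖ * ‖y‖ := by
      intro x y
      have h1 := hAbdd x y
      have h2 := hb u x y
      have : |A₀ x y + b₀ u x y| ≤ |A₀ x y| + |b₀ u x y| := abs_add_le _ _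
      simp only [hBl_def, LinearMap.add_apply, Real.norm_eq_abs]
      nlinarith [norm_nonneg x, norm_nonneg y, norm_nonneg u]
    set B : V →L[ℝ] V →L[ℝ] ℝ := Bl.mkContinuous₂ (Ca + M * ‖u‖) hBlbdd with hB_def
    have hBapp : ∀ x y : V, B x y = A₀ x y + b₀ u x y := by
      intro x y
      rw [hB_def, LinearMap.mkContinuous₂_apply, hBl_def, LinearMap.add_apply,
        LinearMap.add_apply]
    have hcoer_est : ∀ x : V, (c + s) / 2 * ‖x‖ * ‖x‖ ≤ B x x := by
      intro x
      rw [hBapp]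
      have h1 := hAcoer x
      have h2 := (abs_le.mp (hb u x x)).1
      have hMu : M * ‖u‖ ≤ M * r := by
        exact mul_le_mul_of_nonneg_left hu hM.le
      have h3 : M * ‖u‖ * (‖x‖ * ‖x‖) ≤ M * r * (‖x‖ * ‖x‖) :=
        mul_le_mul_of_nonneg_right hMu (mul_nonneg (norm_nonneg x) (norm_nonneg x))
      nlinarith [norm_nonneg x]
    have coer : IsCoercive B := ⟨(c + s) / 2, hcs2, hcoer_est⟩
    set y : V := (InnerProductSpace.toDual ℝ V).symm G with hy_def
    set w : V := coer.continuousLinearEquivOfBilin.symm y with hw_def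
    have heq : ∀ v : V, B w v = G v := by
      intro v
      have h1 : inner ℝ (coer.continuousLinearEquivOfBilin w) v = B w v :=
        coer.continuousLinearEquivOfBilin_apply w v
      rw [hw_def] at h1
      rw [coer.continuousLinearEquivOfBilin.apply_symm_apply y] at h1
      rw [← h1, hy_def]
      exact InnerProductSpace.toDual_symm_apply
    refine ⟨w, fun v => by rw [← hBapp]; exact heq v, ?_⟩
    have h1 : (c + s) / 2 * ‖w‖ * ‖w‖ ≤ B w w := hcoer_est w
    have h2 : B w w = G w := heq w
    have h3 : G w ≤ ‖G‖ * ‖w‖ := by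
      calc G w ≤ |G w| := le_abs_self _
        _ ≤ ‖G‖ * ‖w‖ := G.le_opNorm w
    by_cases hw0 : ‖w‖ = 0
    · rw [hw0]; exact hr0
    · have hwpos : 0 < ‖w‖ := lt_of_le_of_ne (norm_nonneg w) (Ne.symm hw0)
      have : (c + s) / 2 * ‖w‖ ≤ ‖G‖ := by
        have := h1.trans (h2.le.trans h3)
        nlinarith
      rw [hGr, hcMr] at this
      nlinarith
  -- the fixed-point setup on the closed ball
  set S : Set V := Metric.closedBall (0 : V) r with hS_def
  haveI : CompleteSpace S := Metric.isClosed_closedBall.completeSpace_coe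
  have solveS : ∀ u : S, ∃ w : S, ∀ v : V, A₀ (w : V) v + b₀ (u : V) (w : V) v = G v := by
    intro u
    obtain ⟨w, h1, h2⟩ := solve u (mem_closedBall_zero_iff.mp u.2)
    exact ⟨⟨w, mem_closedBall_zero_iff.mpr h2⟩, h1⟩
  choose T hT using solveS
  set K : NNReal := Real.toNNReal ((c - s) / (c + s)) with hK_def
  have hKcoe : (K : ℝ) = (c - s) / (c + s) := by
    rw [hK_def, Real.coe_toNNReal]
    exact div_nonneg (by linarith) (by linarith)
  have hKlt : K < 1 := by
    rw [← NNReal.coe_lt_coe, hKcoe, NNReal.coe_one, div_lt_one (by linarith)]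
    linarith
  have hTnorm : ∀ u : S, ‖(T u : V)‖ ≤ r := fun u => mem_closedBall_zero_iff.mp (T u).2
  have hSnorm : ∀ u : S, ‖(u : V)‖ ≤ r := fun u => mem_closedBall_zero_iff.mp u.2
  have hlip : ∀ x y : S, dist (T x) (T y) ≤ (K : ℝ) * dist x y := by
    intro x y
    set w₁ : V := (T x : V) with hw1
    set w₂ : V := (T y : V) with hw2
    set δ : V := w₁ - w₂ with hδ
    have e1 := hT x
    have e2 := hT y
    have key : A₀ δ δ = b₀ ((y:V) - (x:V)) w₁ δ - b₀ (y:V) δ δ := by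
      have h1 := e1 δ
      have h2 := e2 δ
      simp only [hδ, map_sub, LinearMap.sub_apply] at h1 h2 ⊢
      linarith
    have hcoerδ := hAcoer δ
    have hb1 := (abs_le.mp (hb ((y:V) - (x:V)) w₁ δ)).2
    have hb2 := (abs_le.mp (hb (y:V) δ δ)).1
    have hny : ‖(y:V)‖ ≤ r := hSnorm y
    have hnw1 : ‖w₁‖ ≤ r := hTnorm x
    have hxy : ‖(y:V) - (x:V)‖ = dist x y := by
      rw [Subtype.dist_eq, dist_eq_norm, norm_sub_rev]
    have hdist : dist (T x) (T y) = ‖δ‖ := by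
      rw [Subtype.dist_eq, dist_eq_norm]
    rw [hdist, hKcoe]
    have hineq : (c - M * r) * ‖δ‖ ^ 2 ≤ M * r * (dist x y) * ‖δ‖ := by
      rw [← hxy]
      have t1 : M * ‖(y:V) - (x:V)‖ * ‖w₁‖ * ‖δ‖ ≤ M * ‖(y:V) - (x:V)‖ * r * ‖δ‖ :=
        mul_le_mul_of_nonneg_right
          (mul_le_mul_of_nonneg_left hnw1 (by positivity)) (norm_nonneg δ)
      have t2 : M * ‖(y:V)‖ * ‖δ‖ * ‖δ‖ ≤ M * r * ‖δ‖ * ‖δ‖ :=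
        mul_le_mul_of_nonneg_right (mul_le_mul_of_nonneg_right
          (mul_le_mul_of_nonneg_left hny hM.le) (norm_nonneg δ)) (norm_nonneg δ)
      nlinarith [t1, t2]
    by_cases hδ0 : ‖δ‖ = 0
    · rw [hδ0]
      exact mul_nonneg (div_nonneg (by linarith) (by linarith)) dist_nonneg
    · have hδpos : 0 < ‖δ‖ := lt_of_le_of_ne (norm_nonneg δ) (Ne.symm hδ0)
      rw [hcMr] at hineq
      have hMr : M * r = (c - s) / 2 := by linarith
      rw [hMr] at hineq
      have key2 : (c + s) * ‖δ‖ ≤ (c - s) * dist x y := by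
        have h' : (c + s) * ‖δ‖ * ‖δ‖ ≤ (c - s) * dist x y * ‖δ‖ := by
          rw [show (c + s) * ‖δ‖ * ‖δ‖ = 2 * ((c + s) / 2 * ‖δ‖ ^ 2) by ring,
            show (c - s) * dist x y * ‖δ‖ = 2 * ((c - s) / 2 * dist x y * ‖δ‖) by ring]
          linarith [hineq]
        exact le_of_mul_le_mul_right h' hδpos
      rw [div_mul_eq_mul_div, le_div_iff₀ (by linarith : (0:ℝ) < c + s)]
      linarith [key2, mul_comm ‖δ‖ (c + s)]
  have cw : ContractingWith K T :=
    ⟨hKlt, LipschitzWith.of_dist_le_mul hlip⟩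
  haveI : Nonempty S := ⟨⟨0, Metric.mem_closedBall_self hr0⟩⟩
  obtain ⟨wfix, hfix, -⟩ := cw.exists_fixedPoint (Classical.arbitrary S) (edist_ne_top _ _)
  refine ⟨(wfix : V), ?_, hSnorm wfix⟩
  intro v
  have := hT wfix v
  rwa [hfix] at this

/-- Existence for the abstract Navier–Stokes-type problem: if `A₀` is a bounded coercive
bilinear form, `b₀` a bounded trilinear form that is weakly sequentially continuous in its
first two arguments, and `‖F‖ ≤ c²/(4M)`, then there exists `w` with
`A₀(w,v) + b₀(w,w,v) = ⟨F,v⟩` for all `v` and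
`‖w‖ ≤ c/(2M) - √((c/(2M))² - ‖F‖/M)`. -/
theorem stmt_13 (V : Type*) [NormedAddCommGroup V] [InnerProductSpace ℝ V]
    [CompleteSpace V] [TopologicalSpace.SeparableSpace V]
    (A₀ : V →ₗ[ℝ] V →ₗ[ℝ] ℝ) (b₀ : V →ₗ[ℝ] V →ₗ[ℝ] V →ₗ[ℝ] ℝ)
    (c M Ca : ℝ) (hc : 0 < c) (hM : 0 < M)
    (hAbdd : ∀ u v : V, |A₀ u v| ≤ Ca * ‖u‖ * ‖v‖)
    (hAcoer : ∀ u : V, c * ‖u‖ ^ 2 ≤ A₀ u u)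
    (hb : ∀ u w v : V, |b₀ u w v| ≤ M * ‖u‖ * ‖w‖ * ‖v‖)
    (hbweak : ∀ (u : ℕ → V) (w : V),
      (∀ f : V →L[ℝ] ℝ, Tendsto (fun n => f (u n)) atTop (nhds (f w))) →
      ∀ v : V, Tendsto (fun n => b₀ (u n) (u n) v) atTop (nhds (b₀ w w v)))
    (F : V →L[ℝ] ℝ) (hF : ‖F‖ ≤ c ^ 2 / (4 * M)) :
    ∃ w : V, (∀ v : V, A₀ w v + b₀ w w v = F v) ∧
      ‖w‖ ≤ c / (2 * M) - Real.sqrt ((c / (2 * M)) ^ 2 - ‖F‖ / M) := by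
  have hFnn : (0:ℝ) ≤ ‖F‖ := norm_nonneg F
  have hF4 : 4 * M * ‖F‖ ≤ c ^ 2 := by
    rw [le_div_iff₀ (by positivity)] at hF; linarith
  obtain ⟨t, ht_def⟩ : ∃ t : ℕ → ℝ, t = fun n => 1 - (1/4 : ℝ) ^ (n + 1) := ⟨_, rfl⟩
  have ht0 : ∀ n, 0 ≤ t n := by
    intro n
    simp only [ht_def]
    have := pow_le_one₀ (show (0:ℝ) ≤ 1/4 by norm_num) (show (1/4:ℝ) ≤ 1 by norm_num)
      (n := n + 1)
    linarith
  have ht1 : ∀ n, t n < 1 := by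
    intro n
    simp only [ht_def]
    have : (0:ℝ) < (1/4:ℝ) ^ (n + 1) := by positivity
    linarith
  have htmono : ∀ n, t n ≤ t (n + 1) := by
    intro n
    simp only [ht_def]
    have := pow_le_pow_of_le_one (show (0:ℝ) ≤ 1/4 by norm_num)
      (show (1/4:ℝ) ≤ 1 by norm_num) (show n + 1 ≤ n + 2 by omega)
    linarith
  obtain ⟨G, hG_def⟩ : ∃ G : ℕ → (V →L[ℝ] ℝ), G = fun n => (t n) • F := ⟨_, rfl⟩
  have hGapp : ∀ n (v : V), G n v = t n * F v := by
    intro n v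
    simp [hG_def]
  have hGnorm : ∀ n, ‖G n‖ = t n * ‖F‖ := by
    intro n
    simp only [hG_def]
    rw [norm_smul (t n) F, Real.norm_eq_abs, abs_of_nonneg (ht0 n)]
  have hGlt : ∀ n, ‖G n‖ < c ^ 2 / (4 * M) := by
    intro n
    rw [hGnorm]
    calc t n * ‖F‖ ≤ t n * (c ^ 2 / (4 * M)) :=
          mul_le_mul_of_nonneg_left hF (ht0 n)
      _ < 1 * (c ^ 2 / (4 * M)) :=
          mul_lt_mul_of_pos_right (ht1 n) (by positivity)
      _ = c ^ 2 / (4 * M) := one_mul _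
  choose w hw hwb using fun n =>
    stmt13_strict A₀ b₀ c M Ca hc hM hAbdd hAcoer hb (G n) (hGlt n)
  obtain ⟨r, hr_def⟩ : ∃ r : ℕ → ℝ,
      r = fun n => (c - Real.sqrt (c ^ 2 - 4 * M * ‖G n‖)) / (2 * M) := ⟨_, rfl⟩
  have hwr : ∀ n, ‖w n‖ ≤ r n := by
    intro n
    simp only [hr_def]
    exact hwb n
  have hGnn : ∀ n, (0:ℝ) ≤ ‖G n‖ := fun n => norm_nonneg _
  have hGF : ∀ n, ‖G n‖ ≤ ‖F‖ := by
    intro n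
    rw [hGnorm]
    calc t n * ‖F‖ ≤ 1 * ‖F‖ := mul_le_mul_of_nonneg_right (ht1 n).le hFnn
      _ = ‖F‖ := one_mul _
  have hGmono : ∀ n, ‖G n‖ ≤ ‖G (n + 1)‖ := by
    intro n
    rw [hGnorm, hGnorm]
    exact mul_le_mul_of_nonneg_right (htmono n) hFnn
  have hrmono : ∀ n, r n ≤ r (n + 1) := by
    intro n
    simp only [hr_def]
    have h := Real.sqrt_le_sqrt (show c ^ 2 - 4 * M * ‖G (n+1)‖ ≤ c ^ 2 - 4 * M * ‖G n‖ by
      nlinarith [hGmono n])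
    gcongr
  obtain ⟨ρ, hρ_def⟩ : ∃ ρ : ℝ,
      ρ = (c - Real.sqrt (c ^ 2 - 4 * M * ‖F‖)) / (2 * M) := ⟨_, rfl⟩
  have hrρ : ∀ n, r n ≤ ρ := by
    intro n
    simp only [hr_def, hρ_def]
    have h := Real.sqrt_le_sqrt (show c ^ 2 - 4 * M * ‖F‖ ≤ c ^ 2 - 4 * M * ‖G n‖ by
      nlinarith [hGF n])
    gcongr
  have hrub : ∀ n, r n ≤ c / (2 * M) := by
    intro n
    simp only [hr_def]
    gcongr
    linarith [Real.sqrt_nonneg (c ^ 2 - 4 * M * ‖G n‖)]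
  have hr0 : ∀ n, 0 ≤ r n := by
    intro n
    simp only [hr_def]
    apply div_nonneg _ (by positivity)
    have h1 : Real.sqrt (c ^ 2 - 4 * M * ‖G n‖) ≤ Real.sqrt (c ^ 2) :=
      Real.sqrt_le_sqrt (by nlinarith [hGnn n])
    rw [Real.sqrt_sq hc.le] at h1
    linarith
  have hpowsq : ∀ k : ℕ, ((1/2:ℝ) ^ k) ^ 2 = (1/4:ℝ) ^ k := by
    intro k
    rw [← pow_mul, mul_comm, pow_mul]
    norm_num
  have hlow : ∀ n, c * (1/2:ℝ) ^ (n + 1) ≤ c - 2 * M * r n := by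
    intro n
    have h2Mr : c - 2 * M * r n = Real.sqrt (c ^ 2 - 4 * M * ‖G n‖) := by
      simp only [hr_def]
      field_simp
      ring
    rw [h2Mr]
    apply Real.le_sqrt_of_sq_le
    have h1 : 4 * M * ‖G n‖ ≤ t n * c ^ 2 := by
      rw [hGnorm]
      calc 4 * M * (t n * ‖F‖) = t n * (4 * M * ‖F‖) := by ring
        _ ≤ t n * c ^ 2 := mul_le_mul_of_nonneg_left hF4 (ht0 n)
    have h2 : (c * (1/2:ℝ) ^ (n+1)) ^ 2 = c ^ 2 * (1/4:ℝ) ^ (n+1) := by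
      rw [mul_pow, hpowsq]
    rw [h2]
    have h3 : 4 * M * ‖G n‖ ≤ (1 - (1/4:ℝ)^(n+1)) * c ^ 2 := by
      have ht : t n = 1 - (1/4:ℝ)^(n+1) := by simp [ht_def]
      rwa [ht] at h1
    nlinarith [h3]
  -- Cauchy estimate
  have hdist : ∀ n, dist (w n) (w (n+1)) ≤ (‖F‖ / c) * (1/2:ℝ) ^ n := by
    intro n
    set δ : V := w n - w (n+1) with hδ_def
    rw [dist_eq_norm, ← hδ_def]
    have key : A₀ δ δ = (t n - t (n+1)) * F δ - b₀ δ (w n) δ - b₀ (w (n+1)) δ δ := by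
      have h1 := hw n δ
      have h2 := hw (n+1) δ
      rw [hGapp] at h1 h2
      simp only [hδ_def, map_sub, LinearMap.sub_apply] at h1 h2 ⊢
      ring_nf
      ring_nf at h1 h2
      linarith
    have hΔ : |t n - t (n+1)| ≤ (1/4:ℝ) ^ (n+1) := by
      simp only [ht_def]
      rw [abs_le]
      constructor
      · have : (0:ℝ) ≤ (1/4:ℝ)^(n+2) := by positivity
        ring_nf
        nlinarith [pow_le_pow_of_le_one (show (0:ℝ) ≤ 1/4 by norm_num)
          (show (1/4:ℝ) ≤ 1 by norm_num) (show n + 1 ≤ n + 2 by omega),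
          pow_pos (show (0:ℝ) < 1/4 by norm_num) n]
      · have h1 : (0:ℝ) ≤ (1/4:ℝ)^(n+2) := by positivity
        have h2 := pow_le_pow_of_le_one (show (0:ℝ) ≤ 1/4 by norm_num)
          (show (1/4:ℝ) ≤ 1 by norm_num) (show n + 1 ≤ n + 2 by omega)
        ring_nf
        nlinarith [pow_pos (show (0:ℝ) < 1/4 by norm_num) n]
    have hFδ : |F δ| ≤ ‖F‖ * ‖δ‖ := by
      have := F.le_opNorm δ
      rwa [Real.norm_eq_abs] at this
    have hprod : (t n - t (n+1)) * F δ ≤ (1/4:ℝ)^(n+1) * (‖F‖ * ‖δ‖) := by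
      calc (t n - t (n+1)) * F δ ≤ |(t n - t (n+1)) * F δ| := le_abs_self _
        _ = |t n - t (n+1)| * |F δ| := abs_mul _ _
        _ ≤ (1/4:ℝ)^(n+1) * (‖F‖ * ‖δ‖) :=
            mul_le_mul hΔ hFδ (abs_nonneg _) (by positivity)
    have hb1 : -(b₀ δ (w n) δ) ≤ M * ‖δ‖ * r n * ‖δ‖ := by
      have h1 := (abs_le.mp (hb δ (w n) δ)).1
      have h2 : M * ‖δ‖ * ‖w n‖ * ‖δ‖ ≤ M * ‖δ‖ * r n * ‖δ‖ :=
        mul_le_mul_of_nonneg_right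
          (mul_le_mul_of_nonneg_left (hwr n) (by positivity)) (norm_nonneg δ)
      linarith
    have hb2 : -(b₀ (w (n+1)) δ δ) ≤ M * r (n+1) * ‖δ‖ * ‖δ‖ := by
      have h1 := (abs_le.mp (hb (w (n+1)) δ δ)).1
      have h2 : M * ‖w (n+1)‖ * ‖δ‖ * ‖δ‖ ≤ M * r (n+1) * ‖δ‖ * ‖δ‖ :=
        mul_le_mul_of_nonneg_right (mul_le_mul_of_nonneg_right
          (mul_le_mul_of_nonneg_left (hwr (n+1)) hM.le) (norm_nonneg δ)) (norm_nonneg δ)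
      linarith
    have hcoerδ := hAcoer δ
    have main : (c - M * r n - M * r (n+1)) * ‖δ‖ ^ 2 ≤ (1/4:ℝ)^(n+1) * ‖F‖ * ‖δ‖ := by
      nlinarith [hprod, hb1, hb2, hcoerδ, key]
    by_cases hδ0 : ‖δ‖ = 0
    · rw [hδ0]
      positivity
    · have hδpos : 0 < ‖δ‖ := lt_of_le_of_ne (norm_nonneg δ) (Ne.symm hδ0)
      have hcoef : c * (1/2:ℝ) ^ (n+2) ≤ c - M * r n - M * r (n+1) := by
        have h1 := hlow (n+1)
        have h2 : M * r n ≤ M * r (n+1) := mul_le_mul_of_nonneg_left (hrmono n) hM.le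
        linarith
      have step1 : c * (1/2:ℝ) ^ (n+2) * ‖δ‖ ≤ (1/4:ℝ)^(n+1) * ‖F‖ := by
        have h' : (c * (1/2:ℝ)^(n+2)) * ‖δ‖ * ‖δ‖ ≤ ((1/4:ℝ)^(n+1) * ‖F‖) * ‖δ‖ := by
          nlinarith [main, hcoef, sq_nonneg ‖δ‖]
        exact le_of_mul_le_mul_right h' hδpos
      have h14 : (1/4:ℝ)^(n+1) = (1/2:ℝ)^n * (1/2:ℝ)^(n+2) := by
        rw [← pow_add]
        rw [show n + (n + 2) = 2 * (n + 1) by ring]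
        rw [pow_mul]
        norm_num
      rw [h14] at step1
      have hhalf : (0:ℝ) < (1/2:ℝ)^(n+2) := by positivity
      have step2 : c * ‖δ‖ ≤ ‖F‖ * (1/2:ℝ)^n := by
        have h'' : (c * ‖δ‖) * (1/2:ℝ)^(n+2) ≤ (‖F‖ * (1/2:ℝ)^n) * (1/2:ℝ)^(n+2) := by
          nlinarith [step1]
        exact le_of_mul_le_mul_right h'' hhalf
      rw [div_mul_eq_mul_div, le_div_iff₀ hc]
      nlinarith [step2]
  have hC : CauchySeq w := cauchySeq_of_le_geometric (1/2) (‖F‖/c) (by norm_num) hdist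
  obtain ⟨wl, hwl⟩ := cauchySeq_tendsto_of_complete hC
  have hnorm_to : Tendsto (fun n => ‖w n - wl‖) atTop (nhds 0) :=
    tendsto_iff_norm_sub_tendsto_zero.mp hwl
  have hwbound : ∀ n, ‖w n‖ ≤ c / (2 * M) := fun n => (hwr n).trans (hrub n)
  refine ⟨wl, ?_, ?_⟩
  · intro v
    have hLHS : Tendsto (fun n => A₀ (w n) v + b₀ (w n) (w n) v) atTop
        (nhds (A₀ wl v + b₀ wl wl v)) := by
      rw [tendsto_iff_norm_sub_tendsto_zero]
      apply squeeze_zero (fun n => norm_nonneg _)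
        (g := fun n => ((|Ca| + M * (c / (2*M)) + M * ‖wl‖) * ‖v‖) * ‖w n - wl‖)
      · intro n
        have hident : (A₀ (w n) v + b₀ (w n) (w n) v) - (A₀ wl v + b₀ wl wl v)
            = A₀ (w n - wl) v + b₀ (w n - wl) (w n) v + b₀ wl (w n - wl) v := by
          simp only [map_sub, LinearMap.sub_apply]
          ring
        rw [Real.norm_eq_abs, hident]
        have B1 : |A₀ (w n - wl) v| ≤ |Ca| * ‖w n - wl‖ * ‖v‖ := by
          refine (hAbdd _ _).trans ?_
          have : Ca ≤ |Ca| := le_abs_self Ca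
          nlinarith [norm_nonneg (w n - wl), norm_nonneg v,
            mul_nonneg (norm_nonneg (w n - wl)) (norm_nonneg v)]
        have B2 : |b₀ (w n - wl) (w n) v| ≤ M * ‖w n - wl‖ * (c/(2*M)) * ‖v‖ := by
          refine (hb _ _ _).trans ?_
          exact mul_le_mul_of_nonneg_right
            (mul_le_mul_of_nonneg_left (hwbound n) (by positivity)) (norm_nonneg v)
        have B3 : |b₀ wl (w n - wl) v| ≤ M * ‖wl‖ * ‖w n - wl‖ * ‖v‖ := hb _ _ _
        have habs : |A₀ (w n - wl) v + b₀ (w n - wl) (w n) v + b₀ wl (w n - wl) v|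
            ≤ |A₀ (w n - wl) v| + |b₀ (w n - wl) (w n) v| + |b₀ wl (w n - wl) v| :=
          (abs_add_le _ _).trans (add_le_add_left (abs_add_le _ _) _)
        nlinarith [B1, B2, B3, habs]
      · have := hnorm_to.const_mul ((|Ca| + M * (c / (2*M)) + M * ‖wl‖) * ‖v‖)
        simpa using this
    have hRHS : Tendsto (fun n => G n v) atTop (nhds (F v)) := by
      have h0 : Tendsto (fun n : ℕ => (1/4:ℝ) ^ n) atTop (nhds 0) :=
        tendsto_pow_atTop_nhds_zero_of_lt_one (by norm_num) (by norm_num)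
      have h1 : Tendsto (fun n : ℕ => (1/4:ℝ) ^ (n+1)) atTop (nhds 0) := by
        have := h0.mul_const (1/4:ℝ)
        simpa [pow_succ] using this
      have h2 : Tendsto t atTop (nhds 1) := by
        have h2' : Tendsto (fun n : ℕ => 1 - (1/4:ℝ) ^ (n+1)) atTop (nhds (1 - 0)) :=
          Tendsto.sub tendsto_const_nhds h1
        rw [ht_def]
        simpa using h2'
      have h3 := h2.mul_const (F v)
      rw [one_mul] at h3
      refine h3.congr fun n => ?_
      rw [hGapp]
    have := hLHS.congr fun n => hw n v
    exact tendsto_nhds_unique this hRHS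
  · have h1 : ‖wl‖ ≤ ρ :=
      le_of_tendsto hwl.norm (Filter.Eventually.of_forall fun n => (hwr n).trans (hrρ n))
    have hsqrt : Real.sqrt ((c/(2*M))^2 - ‖F‖/M) = Real.sqrt (c^2 - 4*M*‖F‖) / (2*M) := by
      rw [show (c/(2*M))^2 - ‖F‖/M = (c^2 - 4*M*‖F‖)/((2*M)^2) by
        field_simp; ring]
      rw [Real.sqrt_div (by linarith : (0:ℝ) ≤ c^2 - 4*M*‖F‖),
        Real.sqrt_sq (by positivity : (0:ℝ) ≤ 2*M)]
    rw [hsqrt]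
    calc ‖wl‖ ≤ ρ := h1
      _ = c / (2*M) - Real.sqrt (c^2 - 4*M*‖F‖) / (2*M) := by 
          rw [hρ_def]; ring
end

section
/- Under the assumptions of the previous existence theorem, if additionally the strict inequality ‖F‖_* < c²/(4M) holds and b₀ satisfies b₀(u,w,v) + b₀(v,w,u) bounded as |b₀(e,w,e)| ≤ M‖e‖²‖w‖, then the solution w of A₀(w,v) + b₀(w,w,v) = ⟨F,v⟩ with ‖w‖ ≤ c/(2M) - √((c/(2M))² - ‖F‖_*/M) is unique in that ball. -/
/-- Uniqueness: under the same assumptions, if `‖F‖ < c²/(4M)` strictly, then any two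
solutions of `A₀(w,v) + b₀(w,w,v) = ⟨F,v⟩` satisfying the norm bound
`‖w‖ ≤ c/(2M) - √((c/(2M))² - ‖F‖/M)` coincide. -/
theorem stmt_14 (V : Type*) [NormedAddCommGroup V] [InnerProductSpace ℝ V]
    [CompleteSpace V] [TopologicalSpace.SeparableSpace V]
    (A₀ : V →ₗ[ℝ] V →ₗ[ℝ] ℝ) (b₀ : V →ₗ[ℝ] V →ₗ[ℝ] V →ₗ[ℝ] ℝ)
    (c M Ca : ℝ) (hc : 0 < c) (hM : 0 < M)
    (hAbdd : ∀ u v : V, |A₀ u v| ≤ Ca * ‖u‖ * ‖v‖)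
    (hAcoer : ∀ u : V, c * ‖u‖ ^ 2 ≤ A₀ u u)
    (hb : ∀ u w v : V, |b₀ u w v| ≤ M * ‖u‖ * ‖w‖ * ‖v‖)
    (hbe : ∀ e w : V, |b₀ e w e| ≤ M * ‖e‖ ^ 2 * ‖w‖)
    (F : V →L[ℝ] ℝ) (hF : ‖F‖ < c ^ 2 / (4 * M))
    (w₁ w₂ : V)
    (h₁ : ∀ v : V, A₀ w₁ v + b₀ w₁ w₁ v = F v)
    (h₂ : ∀ v : V, A₀ w₂ v + b₀ w₂ w₂ v = F v)
    (hn₁ : ‖w₁‖ ≤ c / (2 * M) - Real.sqrt ((c / (2 * M)) ^ 2 - ‖F‖ / M))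
    (hn₂ : ‖w₂‖ ≤ c / (2 * M) - Real.sqrt ((c / (2 * M)) ^ 2 - ‖F‖ / M)) :
    w₁ = w₂ := by
  set e := w₁ - w₂ with he
  have key : A₀ e e + (b₀ e w₁ e + b₀ w₂ e e) = 0 := by
    have h1 := h₁ e
    have h2 := h₂ e
    simp only [he, map_sub, LinearMap.sub_apply] at *
    ring_nf
    ring_nf at h1 h2
    linarith
  have hcoe := hAcoer e
  have hb1 := hbe e w₁
  have hb2 := hb w₂ e e
  have habs1 : b₀ e w₁ e ≥ -(M * ‖e‖ ^ 2 * ‖w₁‖) := neg_le_of_abs_le hb1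
  have habs2 : b₀ w₂ e e ≥ -(M * ‖w₂‖ * ‖e‖ * ‖e‖) := neg_le_of_abs_le hb2
  have hsq : c * ‖e‖ ^ 2 ≤ M * ‖e‖ ^ 2 * ‖w₁‖ + M * ‖w₂‖ * ‖e‖ * ‖e‖ := by
    nlinarith
  -- sqrt term is strictly positive
  have hpos : 0 < (c / (2 * M)) ^ 2 - ‖F‖ / M := by
    have : ‖F‖ / M < c ^ 2 / (4 * M ^ 2) := by
      rw [div_lt_div_iff₀ hM (by positivity)]
      have := hF
      rw [lt_div_iff₀ (by positivity)] at this
      nlinarith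
    have h2 : (c / (2 * M)) ^ 2 = c ^ 2 / (4 * M ^ 2) := by ring
    linarith [h2 ▸ this]
  have hs : 0 < Real.sqrt ((c / (2 * M)) ^ 2 - ‖F‖ / M) := Real.sqrt_pos.mpr hpos
  have hw1 : ‖w₁‖ < c / (2 * M) := by linarith
  have hw2 : ‖w₂‖ < c / (2 * M) := by linarith
  have hsum : M * (‖w₁‖ + ‖w₂‖) < c := by
    have : ‖w₁‖ + ‖w₂‖ < c / M := by
      have : c / (2 * M) + c / (2 * M) = c / M := by field_simp; ring
      linarith
    calc M * (‖w₁‖ + ‖w₂‖) < M * (c / M) := by nlinarith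
    _ = c := by field_simp
  have he0 : ‖e‖ = 0 := by
    by_contra h
    have hne : 0 < ‖e‖ := lt_of_le_of_ne (norm_nonneg e) (Ne.symm h)
    have h2 : M * (‖w₁‖ + ‖w₂‖) * ‖e‖ ^ 2 < c * ‖e‖ ^ 2 :=
      mul_lt_mul_of_pos_right hsum (by positivity)
    nlinarith [sq_abs ‖e‖]
  have : e = 0 := norm_eq_zero.mp he0
  exact sub_eq_zero.mp this
end
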